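/- Let A be an associative algebra over a field F of characteristic zero, generated by elements x_1, ..., x_n satisfying x_i x_j = q_{ij} x_j x_i for all i ≠ j with q_{ij} q_{ji} = 1 (a quantum linear space), and x_i^{N_i} = 0 where N_i = ord(q_{ii}) ≥ 2. Suppose further the monomials x_1^{a_1} ⋯ x_n^{a_n} with 0 ≤ a_i < N_i form a basis of A. Then the Lie subalgebra 𝔏⁻ of (A, [·,·]⁻) (commutator bracket) generated by x_1, ..., x_n contains no element with a nonzero coefficient on any monomial x_i^{m} with m ≥ 2, i.e., x_i^m ∉ 𝔏⁻ for 2 ≤ m < N_i. -/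

import Mathlib

/-!
Since the generators commute up to scalars, the product of two ordered monomials
`x^a = x_1^{a_1} ⋯ x_n^{a_n}` and `x^b` is a scalar multiple of `x^{a+b}`, and hence so is
their commutator. Call an exponent vector a nonlinear pure power if it is that of some `x_i^m`
with `m ≥ 2`. If `a ≠ b` are not nonlinear pure powers, neither is `a + b` (otherwise
`a = b = e_i`), while `[x^a, x^a] = 0`. So the span of the ordered monomials that are not
nonlinear pure powers is a Lie subalgebra; it contains the generators, hence `𝔏⁻`. Using
`x_i^{N_i} = 0` it lies in the span of the corresponding PBW basis vectors, which does not
contain the basis vector `x_i^m`.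
-/

attribute [local instance 100] LieRing.ofAssociativeRing

open Submodule

theorem LieSubalgebra.coe_lieSpan_eq_span_of_forall_lie_mem {R L : Type*}
    [CommRing R] [LieRing L] [LieAlgebra R L] {s : Set L}
    (hs : ∀ u ∈ s, ∀ v ∈ s, ⁅u, v⁆ ∈ span R s) :
    (lieSpan R L s : Submodule R L) = span R s := by
  suffices ∀ {u v}, u ∈ span R s → v ∈ span R s → ⁅u, v⁆ ∈ span R s by
    refine le_antisymm ?_ submodule_span_le_lieSpan
    change _ ≤ ({ span R s with lie_mem' := this } : LieSubalgebra R L)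
    rw [lieSpan_le]
    exact subset_span
  intro u v hu hv
  induction hu, hv using span_induction₂ with
  | mem_mem u v hu hv => exact hs u hu v hv
  | zero_left v hv => simp
  | zero_right u hu => simp
  | add_left u v w _ _ _ hu hv => simpa only [add_lie] using add_mem hu hv
  | add_right u v w _ _ _ hv hw => simpa only [lie_add] using add_mem hv hw
  | smul_left r u v _ _ h => simpa only [smul_lie] using smul_mem _ r h
  | smul_right r u v _ _ h => simpa only [lie_smul] using smul_mem _ r h

def QuasiCommute (R : Type*) {A : Type*} [Mul A] [SMul R A] (u v : A) : Prop :=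
  ∃ c : R, u * v = c • (v * u)

namespace QuasiCommute

variable {R A : Type*} [CommSemiring R] [Semiring A] [Algebra R A] {u v w : A}

theorem one_left (v : A) : QuasiCommute R 1 v := ⟨1, by simp⟩

theorem one_right (u : A) : QuasiCommute R u 1 := ⟨1, by simp⟩

theorem mul_left (hu : QuasiCommute R u w) (hv : QuasiCommute R v w) :
    QuasiCommute R (u * v) w := by
  obtain ⟨c, hc⟩ := hu
  obtain ⟨d, hd⟩ := hv
  refine ⟨d * c, ?_⟩
  rw [mul_assoc, hd, mul_smul_comm, ← mul_assoc, hc, smul_mul_assoc, smul_smul, mul_assoc]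

theorem mul_right (hv : QuasiCommute R u v) (hw : QuasiCommute R u w) :
    QuasiCommute R u (v * w) := by
  obtain ⟨c, hc⟩ := hv
  obtain ⟨d, hd⟩ := hw
  refine ⟨c * d, ?_⟩
  rw [← mul_assoc, hc, smul_mul_assoc, mul_assoc, hd, mul_smul_comm, smul_smul, mul_assoc]

theorem pow_left (h : QuasiCommute R u v) (s : ℕ) : QuasiCommute R (u ^ s) v := by
  induction s with
  | zero => simpa using one_left v
  | succ s ih => simpa only [pow_succ] using ih.mul_left h

theorem pow_right (h : QuasiCommute R u v) (t : ℕ) : QuasiCommute R u (v ^ t) := by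
  induction t with
  | zero => simpa using one_right u
  | succ t ih => simpa only [pow_succ] using ih.mul_right h

theorem list_prod_left {l : List A} (h : ∀ z ∈ l, QuasiCommute R z w) :
    QuasiCommute R l.prod w :=
  l.prod_induction _ (fun _ _ => mul_left) (one_left w) h

end QuasiCommute

theorem List.prod_ofFn_eq_of_forall_ne_eq_one {M : Type*} [Monoid M] {n : ℕ} {f : Fin n → M}
    (j : Fin n) (hf : ∀ i, i ≠ j → f i = 1) : (List.ofFn f).prod = f j := by
  induction n with
  | zero => exact j.elim0
  | succ n ih =>
    rw [List.ofFn_succ, List.prod_cons]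
    rcases Fin.eq_zero_or_eq_succ j with rfl | ⟨j, rfl⟩
    · rw [List.prod_eq_one, mul_one]
      simpa only [List.mem_ofFn, forall_exists_index, forall_apply_eq_imp_iff] using
        fun i => hf i.succ (Fin.succ_ne_zero i)
    · rw [hf 0 (Fin.succ_ne_zero j).symm, one_mul]
      exact ih j fun i hi => hf i.succ (Fin.succ_injective _ |>.ne hi)

section OrderedMonomial

variable {M : Type*} [Monoid M] {n : ℕ}

def orderedMonomial (x : Fin n → M) (e : Fin n → ℕ) : M :=
  (List.ofFn fun i => x i ^ e i).prod

theorem orderedMonomial_succ (x : Fin (n + 1) → M) (e : Fin (n + 1) → ℕ) :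
    orderedMonomial x e =
      x 0 ^ e 0 * orderedMonomial (fun i => x i.succ) (fun i => e i.succ) := by
  simp only [orderedMonomial, List.ofFn_succ, List.prod_cons]

theorem orderedMonomial_single (x : Fin n → M) (i : Fin n) (m : ℕ) :
    orderedMonomial x (Pi.single i m) = x i ^ m := by
  rw [orderedMonomial, List.prod_ofFn_eq_of_forall_ne_eq_one i, Pi.single_eq_same]
  intro j hj
  rw [Pi.single_eq_of_ne hj, pow_zero]

end OrderedMonomial

theorem orderedMonomial_eq_zero {M₀ : Type*} [MonoidWithZero M₀] {n : ℕ} {x : Fin n → M₀}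
    {N : Fin n → ℕ} (hnil : ∀ i, x i ^ N i = 0) {e : Fin n → ℕ} {i : Fin n}
    (hi : N i ≤ e i) :
    orderedMonomial x e = 0 := by
  refine List.prod_eq_zero (List.mem_ofFn.mpr ⟨i, ?_⟩)
  rw [← Nat.add_sub_cancel' hi, pow_add, hnil, zero_mul]

section QuasiCommuteFamily

variable {R A : Type*} [CommSemiring R] [Semiring A] [Algebra R A] {n : ℕ} {x : Fin n → A}

theorem QuasiCommute.orderedMonomial_left {y : A}
    (h : ∀ i, QuasiCommute R (x i) y) (e : Fin n → ℕ) :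
    QuasiCommute R (orderedMonomial x e) y :=
  QuasiCommute.list_prod_left <| by
    simpa only [List.mem_ofFn, forall_exists_index, forall_apply_eq_imp_iff] using
      fun i => (h i).pow_left (e i)

theorem orderedMonomial_mul_orderedMonomial
    (hx : Pairwise fun i j => QuasiCommute R (x i) (x j)) (a b : Fin n → ℕ) :
    ∃ c : R, orderedMonomial x a * orderedMonomial x b = c • orderedMonomial x (a + b) := by
  induction n with
  | zero => exact ⟨1, by simp [orderedMonomial]⟩
  | succ n ih =>
    obtain ⟨c, hc⟩ := ih (x := fun i => x i.succ)
      (fun i j hij => hx (Fin.succ_injective _ |>.ne hij)) (fun i => a i.succ) (fun i => b i.succ)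
    obtain ⟨d, hd⟩ := QuasiCommute.orderedMonomial_left
      (fun i => (hx (Fin.succ_ne_zero i)).pow_right (b 0)) (fun i => a i.succ)
    refine ⟨d * c, ?_⟩
    simp only [orderedMonomial_succ, Pi.add_apply]
    rw [mul_assoc, ← mul_assoc (orderedMonomial _ _), hd, smul_mul_assoc, mul_smul_comm,
      ← mul_assoc, ← mul_assoc, ← pow_add, mul_assoc, hc, mul_smul_comm, smul_smul]
    rfl

end QuasiCommuteFamily

theorem orderedMonomial_lie {R A : Type*} [CommRing R] [Ring A] [Algebra R A] {n : ℕ}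
    {x : Fin n → A} (hx : Pairwise fun i j => QuasiCommute R (x i) (x j)) (a b : Fin n → ℕ) :
    ∃ c : R,
      ⁅orderedMonomial x a, orderedMonomial x b⁆ = c • orderedMonomial x (a + b) := by
  obtain ⟨c, hc⟩ := orderedMonomial_mul_orderedMonomial hx a b
  obtain ⟨d, hd⟩ := orderedMonomial_mul_orderedMonomial hx b a
  exact ⟨c - d, by rw [Ring.lie_def, hc, hd, add_comm b, sub_smul]⟩

def IsNonlinearPurePower {ι : Type*} (e : ι → ℕ) : Prop :=
  ∃ i, 2 ≤ e i ∧ ∀ j, j ≠ i → e j = 0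

theorem not_isNonlinearPurePower_add {ι : Type*} {a b : ι → ℕ} (ha : ¬IsNonlinearPurePower a)
    (hb : ¬IsNonlinearPurePower b) (hab : a ≠ b) : ¬IsNonlinearPurePower (a + b) := by
  rintro ⟨i, hi, hzero⟩
  have hzero' : ∀ j, j ≠ i → a j = 0 ∧ b j = 0 := fun j hj => by
    have := hzero j hj
    simp only [Pi.add_apply] at this
    omega
  have ha1 : a i ≤ 1 := not_lt.mp fun h => ha ⟨i, h, fun j hj => (hzero' j hj).1⟩
  have hb1 : b i ≤ 1 := not_lt.mp fun h => hb ⟨i, h, fun j hj => (hzero' j hj).2⟩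
  refine hab (funext fun j => ?_)
  rcases eq_or_ne j i with rfl | hj
  · simp only [Pi.add_apply] at hi
    omega
  · rw [(hzero' j hj).1, (hzero' j hj).2]

theorem lieSpan_le_span_orderedMonomial {R A : Type*} [CommRing R] [Ring A] [Algebra R A] {n : ℕ}
    {x : Fin n → A} (hx : Pairwise fun i j => QuasiCommute R (x i) (x j)) :
    (LieSubalgebra.lieSpan R A (Set.range x) : Submodule R A) ≤
      span R (orderedMonomial x '' {e | ¬IsNonlinearPurePower e}) := by
  rw [← LieSubalgebra.coe_lieSpan_eq_span_of_forall_lie_mem]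
  · refine (LieSubalgebra.toSubmodule_le_toSubmodule _ _).mpr (LieSubalgebra.lieSpan_mono ?_)
    rintro _ ⟨j, rfl⟩
    refine ⟨Pi.single j 1, ?_, (orderedMonomial_single x j 1).trans (pow_one _)⟩
    rintro ⟨i, hi, -⟩
    rcases eq_or_ne i j with rfl | hij
    · simp at hi
    · simp [Pi.single_eq_of_ne hij] at hi
  · rintro _ ⟨a, ha, rfl⟩ _ ⟨b, hb, rfl⟩
    rcases eq_or_ne a b with rfl | hab
    · rw [lie_self]
      exact zero_mem _
    obtain ⟨c, hc⟩ := orderedMonomial_lie hx a b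
    rw [hc]
    exact smul_mem _ c (subset_span ⟨a + b, not_isNonlinearPurePower_add ha hb hab, rfl⟩)

theorem span_orderedMonomial_le_span_basis {R A : Type*} [Semiring R] [Semiring A] [Module R A]
    {n : ℕ} {x : Fin n → A} {N : Fin n → ℕ} (hnil : ∀ i, x i ^ N i = 0)
    (B : Module.Basis ((i : Fin n) → Fin (N i)) R A)
    (hB : ∀ a, B a = orderedMonomial x fun i => (a i : ℕ)) :
    span R (orderedMonomial x '' {e | ¬IsNonlinearPurePower e}) ≤
      span R (B '' {a | ¬IsNonlinearPurePower fun i => (a i : ℕ)}) := by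
  rw [span_le]
  rintro _ ⟨e, he, rfl⟩
  by_cases hlt : ∀ i, e i < N i
  · exact subset_span ⟨fun i => ⟨e i, hlt i⟩, he, hB _⟩
  · obtain ⟨i, hi⟩ := not_forall.mp hlt
    rw [SetLike.mem_coe, orderedMonomial_eq_zero hnil (not_lt.mp hi)]
    exact zero_mem _

theorem stmt16_general {F A : Type*} [Field F] [Ring A] [Algebra F A]
    (n : ℕ) (x : Fin n → A) (q : Fin n → Fin n → F) (N : Fin n → ℕ)
    (hN : ∀ i, 2 ≤ N i)
    (hcomm : ∀ i j, i ≠ j → x i * x j = q i j • (x j * x i))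
    (hnil : ∀ i, x i ^ N i = 0)
    (B : Module.Basis ((i : Fin n) → Fin (N i)) F A)
    (hB : ∀ a, B a = (List.ofFn (fun i => x i ^ (a i : ℕ))).prod) :
    ∀ i m, 2 ≤ m → m < N i →
      x i ^ m ∉ LieSubalgebra.lieSpan F A (Set.range x) := by
  intro i m hm hmN hmem
  have hspan := span_orderedMonomial_le_span_basis hnil B hB
    (lieSpan_le_span_orderedMonomial (fun j k hjk => ⟨q j k, hcomm j k hjk⟩) hmem)
  have hlt : ∀ j, (Pi.single i m : Fin n → ℕ) j < N j := fun j => by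
    rcases eq_or_ne j i with rfl | hj
    · simpa using hmN
    · rw [Pi.single_eq_of_ne hj]
      exact two_pos.trans_le (hN j)
  let a : (j : Fin n) → Fin (N j) := fun j => ⟨(Pi.single i m : Fin n → ℕ) j, hlt j⟩
  have hBa : B a = x i ^ m := (hB a).trans (orderedMonomial_single x i m)
  have ha : IsNonlinearPurePower fun j => (a j : ℕ) :=
    ⟨i, by simpa [a] using hm, fun j hj => by simp [a, Pi.single_eq_of_ne hj]⟩
  rw [← hBa] at hspan
  exact B.linearIndependent.notMem_span_image (not_not.mpr ha) hspan

theorem stmt16 {F A : Type*} [Field F] [CharZero F] [Ring A] [Algebra F A]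
    (n : ℕ) (x : Fin n → A) (q : Fin n → Fin n → F) (N : Fin n → ℕ)
    (hN : ∀ i, 2 ≤ N i)
    (hord : ∀ i, q i i ^ N i = 1 ∧ ∀ k, 0 < k → k < N i → q i i ^ k ≠ 1)
    (hcomm : ∀ i j, i ≠ j → x i * x j = q i j • (x j * x i))
    (hinv : ∀ i j, i ≠ j → q i j * q j i = 1)
    (hnil : ∀ i, x i ^ N i = 0)
    (B : Module.Basis ((i : Fin n) → Fin (N i)) F A)
    (hB : ∀ a, B a = (List.ofFn (fun i => x i ^ (a i : ℕ))).prod) :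
    ∀ i m, 2 ≤ m → m < N i →
      x i ^ m ∉ LieSubalgebra.lieSpan F A (Set.range x) :=
  stmt16_general n x q N hN hcomm hnil B hB
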